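/- arXiv:2106.14066 — 2 statements merged into one kernel-verified Lean document; each statement's English description precedes it below -/
import Mathlib

section
/- Let A be an algebra in a symmetric monoidal category C, and let κ : 𝟙 → A ⊗ A be a morphism satisfying (κ2) (1 ⊗ μ) ∘ (κ ⊗ 1) = (μ ⊗ 1) ∘ (1 ⊗ κ) and (κ4) μ ∘ τ ∘ κ = u. Then κ also satisfies (κ3) κ = τ ∘ κ, i.e., κ is symmetric. -/
open CategoryTheory MonoidalCategory

universe v u

namespace Paper

variable {C : Type u} [Category.{v} C] [MonoidalCategory C] [SymmetricCategory C]

/-- (κ1): μ ∘ κ = u. -/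
def kappa1 (M : Mon C) (κ : 𝟙_ C ⟶ M.X ⊗ M.X) : Prop :=
  κ ≫ M.mon.mul = M.mon.one

/-- (κ2): (1 ⊗ μ) ∘ (κ ⊗ₘ 1) = (μ ⊗ 1) ∘ (1 ⊗ κ), as morphisms A ⟶ A ⊗ A. -/
def kappa2 (M : Mon C) (κ : 𝟙_ C ⟶ M.X ⊗ M.X) : Prop :=
  (λ_ M.X).inv ≫ (κ ▷ M.X) ≫ (α_ M.X M.X M.X).hom ≫ (M.X ◁ M.mon.mul)
    = (ρ_ M.X).inv ≫ (M.X ◁ κ) ≫ (α_ M.X M.X M.X).inv ≫ (M.mon.mul ▷ M.X)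

/-- (κ3): κ = τ ∘ κ. -/
def kappa3 (M : Mon C) (κ : 𝟙_ C ⟶ M.X ⊗ M.X) : Prop :=
  κ = κ ≫ (β_ M.X M.X).hom

/-- (κ4): μ ∘ τ ∘ κ = u. -/
def kappa4 (M : Mon C) (κ : 𝟙_ C ⟶ M.X ⊗ M.X) : Prop :=
  κ ≫ (β_ M.X M.X).hom ≫ M.mon.mul = M.mon.one

/-- A symmetric separability idempotent. -/
def IsSymSepIdem (M : Mon C) (κ : 𝟙_ C ⟶ M.X ⊗ M.X) : Prop :=
  kappa1 M κ ∧ kappa2 M κ ∧ kappa3 M κ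

/-- Strongly separable: admits a symmetric separability idempotent. -/
def StronglySeparable (M : Mon C) : Prop :=
  ∃ κ : 𝟙_ C ⟶ M.X ⊗ M.X, IsSymSepIdem M κ

/-- Separable: the multiplication admits an (A,A)-bilinear section σ. -/
def Separable (M : Mon C) : Prop :=
  ∃ σ : M.X ⟶ M.X ⊗ M.X,
    σ ≫ M.mon.mul = 𝟙 M.X ∧
    (σ ▷ M.X) ≫ (α_ M.X M.X M.X).hom ≫ (M.X ◁ M.mon.mul) = M.mon.mul ≫ σ ∧
    M.mon.mul ≫ σ = (M.X ◁ σ) ≫ (α_ M.X M.X M.X).inv ≫ (M.mon.mul ▷ M.X)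

/-- The algebra is commutative: μ ∘ τ = μ. -/
def Commutative (M : Mon C) : Prop :=
  (β_ M.X M.X).hom ≫ M.mon.mul = M.mon.mul

/-- Duality data exhibiting `DA` as a dual of `A`, with evaluation `ε : A ⊗ DA ⟶ 𝟙`
and coevaluation `η : 𝟙 ⟶ DA ⊗ A`, satisfying the triangle identities. -/
structure DualityData (A : C) where
  DA : C
  η : 𝟙_ C ⟶ DA ⊗ A
  ε : A ⊗ DA ⟶ 𝟙_ C
  triangle₁ :
    (ρ_ A).inv ≫ (A ◁ η) ≫ (α_ A DA A).inv ≫ (ε ▷ A) ≫ (λ_ A).hom = 𝟙 A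
  triangle₂ :
    (λ_ DA).inv ≫ (η ▷ DA) ≫ (α_ DA A DA).hom ≫ (DA ◁ ε) ≫ (ρ_ DA).hom = 𝟙 DA

/-- The trace map tr : A ⟶ 𝟙 of a rigid algebra:
A ≅ A ⊗ 𝟙 → A ⊗ (DA ⊗ A) → A ⊗ (A ⊗ DA) → (A ⊗ A) ⊗ DA → A ⊗ DA → 𝟙. -/
def tr (M : Mon C) (D : DualityData M.X) : M.X ⟶ 𝟙_ C :=
  (ρ_ M.X).inv ≫ (M.X ◁ D.η) ≫ (M.X ◁ (β_ D.DA M.X).hom) ≫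
    (α_ M.X M.X D.DA).inv ≫ (M.mon.mul ▷ D.DA) ≫ D.ε

/-- The trace form t = tr ∘ μ : A ⊗ A ⟶ 𝟙. -/
def traceForm (M : Mon C) (D : DualityData M.X) : M.X ⊗ M.X ⟶ 𝟙_ C :=
  M.mon.mul ≫ tr M D

/-- The adjoint t* : A ⟶ DA of the trace form. -/
def tStar (M : Mon C) (D : DualityData M.X) : M.X ⟶ D.DA :=
  (λ_ M.X).inv ≫ (D.η ▷ M.X) ≫ (α_ D.DA M.X M.X).hom ≫
    (D.DA ◁ traceForm M D) ≫ (ρ_ D.DA).hom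

/-- Invariant (associative) form: f ∘ (μ ⊗ 1) = f ∘ (1 ⊗ μ). -/
def Invariant (M : Mon C) (f : M.X ⊗ M.X ⟶ 𝟙_ C) : Prop :=
  (M.mon.mul ▷ M.X) ≫ f = (α_ M.X M.X M.X).hom ≫ (M.X ◁ M.mon.mul) ≫ f

/-- The map A ⟶ A ⊗ A corresponding to a separability idempotent κ
(the common value in (κ2)). -/
def sepComul (M : Mon C) (κ : 𝟙_ C ⟶ M.X ⊗ M.X) : M.X ⟶ M.X ⊗ M.X :=
  (λ_ M.X).inv ≫ (κ ▷ M.X) ≫ (α_ M.X M.X M.X).hom ≫ (M.X ◁ M.mon.mul)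

/-- A Frobenius structure on the algebra `M`: a compatible coalgebra structure
satisfying the Frobenius law. -/
structure FrobeniusStructure (M : Mon C) where
  Δ : M.X ⟶ M.X ⊗ M.X
  c : M.X ⟶ 𝟙_ C
  coassoc : Δ ≫ (Δ ▷ M.X) ≫ (α_ M.X M.X M.X).hom = Δ ≫ (M.X ◁ Δ)
  counit_left : Δ ≫ (c ▷ M.X) ≫ (λ_ M.X).hom = 𝟙 M.X
  counit_right : Δ ≫ (M.X ◁ c) ≫ (ρ_ M.X).hom = 𝟙 M.X
  frob_left :
    (Δ ▷ M.X) ≫ (α_ M.X M.X M.X).hom ≫ (M.X ◁ M.mon.mul) = M.mon.mul ≫ Δ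
  frob_right :
    M.mon.mul ≫ Δ = (M.X ◁ Δ) ≫ (α_ M.X M.X M.X).inv ≫ (M.mon.mul ▷ M.X)

/-- Special: μ ∘ Δ = id. -/
def FrobeniusStructure.Special {M : Mon C} (F : FrobeniusStructure M) : Prop :=
  F.Δ ≫ M.mon.mul = 𝟙 M.X

/-- Symmetric: the form c ∘ μ is symmetric. -/
def FrobeniusStructure.Symm {M : Mon C} (F : FrobeniusStructure M) : Prop :=
  (β_ M.X M.X).hom ≫ M.mon.mul ≫ F.c = M.mon.mul ≫ F.c

section AuxBraid

variable (X : C)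

/-- Elementary braiding on strands 1,2 of `(X⊗X)⊗(X⊗X)`. -/
def T1 : (X⊗X)⊗(X⊗X) ⟶ (X⊗X)⊗(X⊗X) := (β_ X X).hom ▷ (X⊗X)

/-- Elementary braiding on strands 3,4. -/
def T3 : (X⊗X)⊗(X⊗X) ⟶ (X⊗X)⊗(X⊗X) := (X⊗X) ◁ (β_ X X).hom

/-- Elementary braiding on strands 2,3. -/
def T2 : (X⊗X)⊗(X⊗X) ⟶ (X⊗X)⊗(X⊗X) :=
  (α_ X X (X⊗X)).hom ≫ (X ◁ ((α_ X X X).inv ≫ ((β_ X X).hom ▷ X) ≫ (α_ X X X).hom)) ≫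
    (α_ X X (X⊗X)).inv

theorem tex : T1 X ≫ T3 X = T3 X ≫ T1 X := (whisker_exchange _ _).symm

theorem t2sq : T2 X ≫ T2 X = 𝟙 _ := by
  calc T2 X ≫ T2 X
      = 𝟙 _ ⊗≫ (X ◁ (((β_ X X).hom ≫ (β_ X X).hom) ▷ X)) ⊗≫ 𝟙 _ := by
        simp only [T2, comp_whiskerRight, MonoidalCategory.whiskerLeft_comp]; monoidal
    _ = 𝟙 _ := by rw [SymmetricCategory.symmetry]; monoidal

theorem yb121 : T1 X ≫ T2 X ≫ T1 X = T2 X ≫ T1 X ≫ T2 X := by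
  calc T1 X ≫ T2 X ≫ T1 X
      = 𝟙 _ ⊗≫ (((α_ X X X).inv ≫ (β_ X X).hom ▷ X ≫ (α_ X X X).hom ≫ X ◁ (β_ X X).hom ≫
          (α_ X X X).inv ≫ (β_ X X).hom ▷ X ≫ (α_ X X X).hom) ▷ X) ⊗≫ 𝟙 _ := by
        simp only [T1, T2]; monoidal
    _ = 𝟙 _ ⊗≫ ((X ◁ (β_ X X).hom ≫ (α_ X X X).inv ≫ (β_ X X).hom ▷ X ≫
          (α_ X X X).hom ≫ X ◁ (β_ X X).hom) ▷ X) ⊗≫ 𝟙 _ := by rw [BraidedCategory.yang_baxter]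
    _ = T2 X ≫ T1 X ≫ T2 X := by simp only [T1, T2]; monoidal

theorem yb323 : T3 X ≫ T2 X ≫ T3 X = T2 X ≫ T3 X ≫ T2 X := by
  calc T3 X ≫ T2 X ≫ T3 X
      = 𝟙 _ ⊗≫ (X ◁ (X ◁ (β_ X X).hom ≫ (α_ X X X).inv ≫ (β_ X X).hom ▷ X ≫
          (α_ X X X).hom ≫ X ◁ (β_ X X).hom)) ⊗≫ 𝟙 _ := by
        simp only [T1, T2, T3]; monoidal
    _ = 𝟙 _ ⊗≫ (X ◁ ((α_ X X X).inv ≫ (β_ X X).hom ▷ X ≫ (α_ X X X).hom ≫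
          X ◁ (β_ X X).hom ≫ (α_ X X X).inv ≫ (β_ X X).hom ▷ X ≫ (α_ X X X).hom)) ⊗≫ 𝟙 _ := by
        rw [← BraidedCategory.yang_baxter]
    _ = T2 X ≫ T3 X ≫ T2 X := by simp only [T2, T3]; monoidal

/-- The cyclic rotation `(x1,x2,x3,x4) ↦ (x4,x1,x2,x3)`. -/
def sig : (X⊗X)⊗(X⊗X) ⟶ (X⊗X)⊗(X⊗X) :=
  (α_ (X⊗X) X X).inv ≫ (β_ ((X⊗X)⊗X) X).hom ≫ (X ◁ (α_ X X X).hom) ≫ (α_ X X (X⊗X)).inv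

/-- The cyclic rotation `(x1,x2,x3,x4) ↦ (x2,x3,x4,x1)`. -/
def iot : (X⊗X)⊗(X⊗X) ⟶ (X⊗X)⊗(X⊗X) :=
  (α_ X X (X⊗X)).hom ≫ (X ◁ (α_ X X X).inv) ≫ (β_ X ((X⊗X)⊗X)).hom ≫ (α_ (X⊗X) X X).hom

theorem sig_eq : sig X = T3 X ≫ T2 X ≫ T1 X := by
  simp only [sig, T1, T2, T3, BraidedCategory.braiding_tensor_left_hom]
  monoidal

theorem beta_eq : (β_ (X⊗X) (X⊗X)).hom = T2 X ≫ T1 X ≫ T3 X ≫ T2 X := by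
  simp only [T1, T2, T3, BraidedCategory.braiding_tensor_left_hom,
    BraidedCategory.braiding_tensor_right_hom]
  monoidal

theorem sig_sq : sig X ≫ sig X = (β_ (X⊗X) (X⊗X)).hom := by
  rw [beta_eq, sig_eq]
  calc (T3 X ≫ T2 X ≫ T1 X) ≫ T3 X ≫ T2 X ≫ T1 X
      = T3 X ≫ T2 X ≫ (T1 X ≫ T3 X) ≫ T2 X ≫ T1 X := by simp only [Category.assoc]
    _ = (T3 X ≫ T2 X ≫ T3 X) ≫ (T1 X ≫ T2 X ≫ T1 X) := by
        rw [tex]; simp only [Category.assoc]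
    _ = (T2 X ≫ T3 X ≫ T2 X) ≫ (T2 X ≫ T1 X ≫ T2 X) := by rw [yb323, yb121]
    _ = T2 X ≫ T3 X ≫ (T2 X ≫ T2 X) ≫ T1 X ≫ T2 X := by simp only [Category.assoc]
    _ = T2 X ≫ (T3 X ≫ T1 X) ≫ T2 X := by
        rw [t2sq]; simp only [Category.assoc, Category.id_comp]
    _ = T2 X ≫ T1 X ≫ T3 X ≫ T2 X := by rw [← tex]; simp only [Category.assoc]

theorem iot_sig : iot X ≫ sig X = 𝟙 _ := by
  simp only [iot, sig, Category.assoc, Iso.hom_inv_id_assoc]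
  rw [SymmetricCategory.symmetry_assoc]
  monoidal

theorem sig_four : sig X ≫ sig X ≫ sig X ≫ sig X = 𝟙 _ := by
  calc sig X ≫ sig X ≫ sig X ≫ sig X = (sig X ≫ sig X) ≫ (sig X ≫ sig X) := by
        simp only [Category.assoc]
    _ = 𝟙 _ := by rw [sig_sq, SymmetricCategory.symmetry]

theorem iot_eq : iot X = (β_ (X⊗X) (X⊗X)).hom ≫ sig X := by
  calc iot X = iot X ≫ (sig X ≫ sig X ≫ sig X ≫ sig X) := by rw [sig_four, Category.comp_id]
    _ = (iot X ≫ sig X) ≫ sig X ≫ sig X ≫ sig X := by simp only [Category.assoc]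
    _ = (sig X ≫ sig X) ≫ sig X := by rw [iot_sig, Category.id_comp]; simp only [Category.assoc]
    _ = (β_ (X⊗X) (X⊗X)).hom ≫ sig X := by rw [sig_sq]

theorem sig_comm : sig X ≫ (β_ (X⊗X) (X⊗X)).hom = (β_ (X⊗X) (X⊗X)).hom ≫ sig X := by
  rw [← sig_sq]; simp only [Category.assoc]

theorem iot_beta : iot X ≫ (β_ (X⊗X) (X⊗X)).hom = sig X := by
  rw [iot_eq, Category.assoc, sig_comm, ← Category.assoc, SymmetricCategory.symmetry,
    Category.id_comp]

end AuxBraid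

theorem kk_inv (X : C) (κ : 𝟙_ C ⟶ X ⊗ X) :
    (κ ⊗ₘ κ) ≫ (β_ (X⊗X) (X⊗X)).hom = κ ⊗ₘ κ := by
  rw [BraidedCategory.braiding_naturality]
  have h1 : (β_ (𝟙_ C) (𝟙_ C)).hom = 𝟙 _ := by
    have h := braiding_rightUnitor (C := C) (𝟙_ C)
    rw [← cancel_mono (ρ_ (𝟙_ C)).hom, Category.id_comp, h, unitors_equal]
  rw [h1, Category.id_comp]

theorem key (X : C) (m : X ⊗ X ⟶ X) (u : 𝟙_ C ⟶ X)
    (hmu : (X ◁ u) ≫ m = (ρ_ X).hom)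
    (hma : (m ▷ X) ≫ m = (α_ X X X).hom ≫ (X ◁ m) ≫ m)
    (κ : 𝟙_ C ⟶ X ⊗ X)
    (h2 : (λ_ X).inv ≫ (κ ▷ X) ≫ (α_ X X X).hom ≫ (X ◁ m)
        = (ρ_ X).inv ≫ (X ◁ κ) ≫ (α_ X X X).inv ≫ (m ▷ X))
    (h4 : κ ≫ (β_ X X).hom ≫ m = u) :
    κ = (λ_ (𝟙_ C)).inv ≫ (κ ⊗ₘ κ) ≫ iot X ≫ (m ⊗ₘ m) := by
  have k1 : κ = κ ≫ (ρ_ (X⊗X)).inv ≫ ((X⊗X) ◁ u) ≫ (α_ X X X).hom ≫ (X ◁ m) := by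
    have inner : (ρ_ (X⊗X)).inv ≫ ((X⊗X) ◁ u) ≫ (α_ X X X).hom ≫ (X ◁ m) = 𝟙 _ := by
      calc (ρ_ (X⊗X)).inv ≫ ((X⊗X) ◁ u) ≫ (α_ X X X).hom ≫ (X ◁ m)
          = 𝟙 _ ⊗≫ (X ◁ ((X ◁ u) ≫ m)) ⊗≫ 𝟙 _ := by
            simp only [MonoidalCategory.whiskerLeft_comp]; monoidal
        _ = 𝟙 _ := by rw [hmu]; monoidal
    rw [inner, Category.comp_id]
  have hsplit : κ ⊗ₘ (κ ≫ (β_ X X).hom ≫ m)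
      = (κ ⊗ₘ (κ ≫ (β_ X X).hom)) ≫ ((X⊗X) ◁ m) := by
    rw [← MonoidalCategory.id_tensorHom, tensorHom_comp_tensorHom, Category.comp_id]
    simp only [Category.assoc]
  have haux : ((X⊗X) ◁ m) ≫ (α_ X X X).hom ≫ (X ◁ m)
      = (α_ X X (X⊗X)).hom ≫ (X ◁ ((X ◁ m) ≫ m)) := by
    rw [MonoidalCategory.whiskerLeft_comp]; monoidal
  have hma' : (X ◁ m) ≫ m = (α_ X X X).inv ≫ (m ▷ X) ≫ m := by
    rw [hma, Iso.inv_hom_id_assoc]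
  have k3 : κ = (λ_ (𝟙_ C)).inv ≫ (κ ⊗ₘ (κ ≫ (β_ X X).hom)) ≫ (α_ X X (X⊗X)).hom ≫
      (X ◁ ((α_ X X X).inv ≫ (m ▷ X) ≫ m)) := by
    calc κ = κ ≫ (ρ_ (X⊗X)).inv ≫ ((X⊗X) ◁ u) ≫ (α_ X X X).hom ≫ (X ◁ m) := k1
      _ = κ ≫ (ρ_ (X⊗X)).inv ≫ ((X⊗X) ◁ (κ ≫ (β_ X X).hom ≫ m)) ≫ (α_ X X X).hom ≫
            (X ◁ m) := by rw [h4]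
      _ = (λ_ (𝟙_ C)).inv ≫ (κ ⊗ₘ (κ ≫ (β_ X X).hom ≫ m)) ≫ (α_ X X X).hom ≫ (X ◁ m) := by
            rw [rightUnitor_inv_naturality_assoc, ← unitors_inv_equal, ← tensorHom_def_assoc]
      _ = (λ_ (𝟙_ C)).inv ≫ (κ ⊗ₘ (κ ≫ (β_ X X).hom)) ≫ ((X⊗X) ◁ m) ≫ (α_ X X X).hom ≫
            (X ◁ m) := by rw [hsplit]; simp only [Category.assoc]
      _ = (λ_ (𝟙_ C)).inv ≫ (κ ⊗ₘ (κ ≫ (β_ X X).hom)) ≫ (α_ X X (X⊗X)).hom ≫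
            (X ◁ ((X ◁ m) ≫ m)) := by rw [haux]
      _ = (λ_ (𝟙_ C)).inv ≫ (κ ⊗ₘ (κ ≫ (β_ X X).hom)) ≫ (α_ X X (X⊗X)).hom ≫
            (X ◁ ((α_ X X X).inv ≫ (m ▷ X) ≫ m)) := by rw [hma']
  have aux2 : (λ_ (X⊗X)).inv ≫ (κ ▷ (X⊗X)) ≫ (α_ X X (X⊗X)).hom ≫
        (X ◁ ((α_ X X X).inv ≫ (m ▷ X) ≫ m))
      = (((λ_ X).inv ≫ (κ ▷ X) ≫ (α_ X X X).hom ≫ (X ◁ m)) ▷ X) ≫ (α_ X X X).hom ≫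
        (X ◁ m) := by monoidal
  have k6 : κ = (κ ≫ (β_ X X).hom) ≫
      (((ρ_ X).inv ≫ (X ◁ κ) ≫ (α_ X X X).inv ≫ (m ▷ X)) ▷ X) ≫ (α_ X X X).hom ≫
      (X ◁ m) := by
    calc κ = (λ_ (𝟙_ C)).inv ≫ (κ ⊗ₘ (κ ≫ (β_ X X).hom)) ≫ (α_ X X (X⊗X)).hom ≫
            (X ◁ ((α_ X X X).inv ≫ (m ▷ X) ≫ m)) := k3
      _ = (κ ≫ (β_ X X).hom) ≫ (λ_ (X⊗X)).inv ≫ (κ ▷ (X⊗X)) ≫ (α_ X X (X⊗X)).hom ≫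
            (X ◁ ((α_ X X X).inv ≫ (m ▷ X) ≫ m)) := by
          rw [tensorHom_def'_assoc, ← leftUnitor_inv_naturality_assoc]
      _ = (κ ≫ (β_ X X).hom) ≫
            (((λ_ X).inv ≫ (κ ▷ X) ≫ (α_ X X X).hom ≫ (X ◁ m)) ▷ X) ≫ (α_ X X X).hom ≫
            (X ◁ m) := by rw [aux2]
      _ = (κ ≫ (β_ X X).hom) ≫
            (((ρ_ X).inv ≫ (X ◁ κ) ≫ (α_ X X X).inv ≫ (m ▷ X)) ▷ X) ≫ (α_ X X X).hom ≫
            (X ◁ m) := by rw [h2]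
  have c1 : κ ≫ (X ◁ ((ρ_ X).inv ≫ (X ◁ κ) ≫ (α_ X X X).inv))
      = (λ_ (𝟙_ C)).inv ≫ (κ ⊗ₘ κ) ≫ (α_ X X (X⊗X)).hom ≫ (X ◁ (α_ X X X).inv) := by
    rw [MonoidalCategory.tensorHom_def]; monoidal
  have c2 : ((m ▷ X) ▷ X) ≫ (α_ X X X).hom ≫ (X ◁ m) = (α_ (X⊗X) X X).hom ≫ (m ⊗ₘ m) := by
    rw [MonoidalCategory.tensorHom_def]; monoidal
  calc κ = (κ ≫ (β_ X X).hom) ≫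
        (((ρ_ X).inv ≫ (X ◁ κ) ≫ (α_ X X X).inv ≫ (m ▷ X)) ▷ X) ≫ (α_ X X X).hom ≫
        (X ◁ m) := k6
    _ = κ ≫ (X ◁ ((ρ_ X).inv ≫ (X ◁ κ) ≫ (α_ X X X).inv ≫ (m ▷ X))) ≫
          (β_ X (X⊗X)).hom ≫ (α_ X X X).hom ≫ (X ◁ m) := by
        simp only [Category.assoc]
        rw [← BraidedCategory.braiding_naturality_right_assoc]
    _ = κ ≫ (X ◁ ((ρ_ X).inv ≫ (X ◁ κ) ≫ (α_ X X X).inv)) ≫ (X ◁ (m ▷ X)) ≫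
          (β_ X (X⊗X)).hom ≫ (α_ X X X).hom ≫ (X ◁ m) := by
        simp only [MonoidalCategory.whiskerLeft_comp, Category.assoc]
    _ = κ ≫ (X ◁ ((ρ_ X).inv ≫ (X ◁ κ) ≫ (α_ X X X).inv)) ≫ (β_ X ((X⊗X)⊗X)).hom ≫
          ((m ▷ X) ▷ X) ≫ (α_ X X X).hom ≫ (X ◁ m) := by
        rw [BraidedCategory.braiding_naturality_right_assoc]
    _ = (λ_ (𝟙_ C)).inv ≫ (κ ⊗ₘ κ) ≫ (α_ X X (X⊗X)).hom ≫ (X ◁ (α_ X X X).inv) ≫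
          (β_ X ((X⊗X)⊗X)).hom ≫ ((m ▷ X) ▷ X) ≫ (α_ X X X).hom ≫ (X ◁ m) := by
        rw [reassoc_of% c1]
    _ = (λ_ (𝟙_ C)).inv ≫ (κ ⊗ₘ κ) ≫ (α_ X X (X⊗X)).hom ≫ (X ◁ (α_ X X X).inv) ≫
          (β_ X ((X⊗X)⊗X)).hom ≫ (α_ (X⊗X) X X).hom ≫ (m ⊗ₘ m) := by rw [c2]
    _ = (λ_ (𝟙_ C)).inv ≫ (κ ⊗ₘ κ) ≫ iot X ≫ (m ⊗ₘ m) := by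
        simp only [iot, Category.assoc]

/-- (κ2) and (κ4) together imply (κ3). -/
theorem kappa3_of_kappa2_kappa4 (M : Mon C) (κ : 𝟙_ C ⟶ M.X ⊗ M.X)
    (h2 : kappa2 M κ) (h4 : kappa4 M κ) : kappa3 M κ := by
  unfold kappa2 at h2
  unfold kappa4 at h4
  unfold kappa3
  have K := key M.X M.mon.mul M.mon.one (MonObj.mul_one M.X) (MonObj.mul_assoc M.X) κ h2 h4
  have E1 : κ = (λ_ (𝟙_ C)).inv ≫ (κ ⊗ₘ κ) ≫ sig M.X ≫ (M.mon.mul ⊗ₘ M.mon.mul) := by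
    calc κ = (λ_ (𝟙_ C)).inv ≫ (κ ⊗ₘ κ) ≫ iot M.X ≫ (M.mon.mul ⊗ₘ M.mon.mul) := K
      _ = (λ_ (𝟙_ C)).inv ≫ ((κ ⊗ₘ κ) ≫ (β_ (M.X⊗M.X) (M.X⊗M.X)).hom) ≫ sig M.X ≫
            (M.mon.mul ⊗ₘ M.mon.mul) := by rw [iot_eq]; simp only [Category.assoc]
      _ = (λ_ (𝟙_ C)).inv ≫ (κ ⊗ₘ κ) ≫ sig M.X ≫ (M.mon.mul ⊗ₘ M.mon.mul) := by rw [kk_inv]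
  have E2 : κ ≫ (β_ M.X M.X).hom
      = (λ_ (𝟙_ C)).inv ≫ (κ ⊗ₘ κ) ≫ sig M.X ≫ (M.mon.mul ⊗ₘ M.mon.mul) := by
    conv_lhs => rw [K]
    simp only [Category.assoc]
    rw [BraidedCategory.braiding_naturality, reassoc_of% (iot_beta M.X)]
  rw [← E1] at E2
  exact E2.symm

end Paper
end

section
/- A rigid commutative algebra in a symmetric monoidal category is separable if and only if it is strongly separable, if and only if its trace form is nondegenerate. -/
open CategoryTheory MonoidalCategory

universe v u

namespace Paper

variable {C : Type u} [Category.{v} C] [MonoidalCategory C] [SymmetricCategory C]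

section Aux

variable (M : Mon C) (D : DualityData M.X)

/-- First zig-zag for the pairing `traceForm` with copairing `f`
(in the form of `ExactPairing.coevaluation_evaluation`). -/
def Tri1 (f : 𝟙_ C ⟶ M.X ⊗ M.X) : Prop :=
  M.X ◁ f ≫ (α_ M.X M.X M.X).inv ≫ traceForm M D ▷ M.X = (ρ_ M.X).hom ≫ (λ_ M.X).inv

/-- Second zig-zag for the pairing `traceForm` with copairing `f`. -/
def Tri2 (f : 𝟙_ C ⟶ M.X ⊗ M.X) : Prop :=
  f ▷ M.X ≫ (α_ M.X M.X M.X).hom ≫ M.X ◁ traceForm M D = (λ_ M.X).hom ≫ (ρ_ M.X).inv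


/-- Creating a pair of strands to the right of `W` and crossing `W` past the first
leg equals creating the pair to the left and un-crossing the second leg. -/
theorem create_cross (W X Y : C) (g : 𝟙_ C ⟶ X ⊗ Y) :
    W ◁ g ≫ (α_ W X Y).inv ≫ ((β_ W X).hom ▷ Y)
      = (β_ W (𝟙_ C)).hom ≫ (g ▷ W) ≫ (α_ X Y W).hom ≫ (X ◁ (β_ W Y).inv)
          ≫ (α_ X W Y).inv := by
  have h := BraidedCategory.braiding_naturality_right W g
  rw [BraidedCategory.braiding_tensor_right_hom] at h
  rw [← cancel_mono ((α_ X W Y).hom ≫ (X ◁ (β_ W Y).hom) ≫ (α_ X Y W).inv)]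
  simp only [Category.assoc]
  rw [h]
  simp

theorem traceForm_symm (hcomm : Commutative M) :
    (β_ M.X M.X).hom ≫ traceForm M D = traceForm M D := by
  have h : (β_ M.X M.X).hom ≫ M.mon.mul = M.mon.mul := hcomm
  rw [traceForm, ← Category.assoc, h]

theorem traceForm_invariant :
    (M.mon.mul ▷ M.X) ≫ traceForm M D
      = (α_ M.X M.X M.X).hom ≫ (M.X ◁ M.mon.mul) ≫ traceForm M D := by
  rw [traceForm, ← Category.assoc, MonObj.mul_assoc]
  simp only [Category.assoc]

/-- Transporting the first zig-zag across the braiding, for a symmetric pairing. -/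
theorem tri2_swap (hcomm : Commutative M) {f : 𝟙_ C ⟶ M.X ⊗ M.X}
    (h1 : Tri1 M D f) : Tri2 M D (f ≫ (β_ M.X M.X).hom) := by
  have h1' : M.X ◁ f ≫ (α_ M.X M.X M.X).inv ≫ traceForm M D ▷ M.X
      = (ρ_ M.X).hom ≫ (λ_ M.X).inv := h1
  have hts : (β_ M.X M.X).hom ≫ traceForm M D = traceForm M D :=
    traceForm_symm M D hcomm
  have eq1 : M.X ◁ (β_ M.X M.X).hom ≫ (α_ M.X M.X M.X).inv ≫ (β_ M.X M.X).hom ▷ M.X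
      = (α_ M.X M.X M.X).inv ≫ (β_ (M.X ⊗ M.X) M.X).hom ≫ (α_ M.X M.X M.X).inv := by
    rw [BraidedCategory.braiding_tensor_left_hom]; simp
  have n1' : (f ≫ (β_ M.X M.X).hom) ▷ M.X
      = (β_ M.X (𝟙_ C)).inv ≫ (M.X ◁ (f ≫ (β_ M.X M.X).hom))
          ≫ (β_ M.X (M.X ⊗ M.X)).hom := by
    rw [BraidedCategory.braiding_naturality_right, Iso.inv_hom_id_assoc]
  show (f ≫ (β_ M.X M.X).hom) ▷ M.X ≫ (α_ M.X M.X M.X).hom ≫ M.X ◁ traceForm M D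
      = (λ_ M.X).hom ≫ (ρ_ M.X).inv
  rw [n1']
  simp only [Category.assoc, MonoidalCategory.whiskerLeft_comp]
  rw [BraidedCategory.braiding_tensor_right_hom]
  simp only [Category.assoc, Iso.inv_hom_id_assoc]
  rw [← MonoidalCategory.whiskerLeft_comp, hts]
  rw [reassoc_of% eq1]
  simp only [Category.assoc, Iso.inv_hom_id_assoc]
  rw [← BraidedCategory.braiding_naturality_left]
  rw [reassoc_of% h1']
  simp

theorem tri_uniq {e f : 𝟙_ C ⟶ M.X ⊗ M.X}
    (h1 : Tri1 M D e) (h2 : Tri2 M D f) : f = e := by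
  have h1' : M.X ◁ e ≫ (α_ M.X M.X M.X).inv ≫ traceForm M D ▷ M.X
      = (ρ_ M.X).hom ≫ (λ_ M.X).inv := h1
  have h2' : f ▷ M.X ≫ (α_ M.X M.X M.X).hom ≫ M.X ◁ traceForm M D
      = (λ_ M.X).hom ≫ (ρ_ M.X).inv := h2
  calc f = 𝟙 _ ⊗≫ f ⊗≫
        M.X ◁ (M.X ◁ e ≫ (α_ M.X M.X M.X).inv ≫ traceForm M D ▷ M.X) ⊗≫ 𝟙 _ := by
        rw [h1']; monoidal
    _ = 𝟙 _ ⊗≫ (f ▷ (𝟙_ C) ≫ (M.X ⊗ M.X : C) ◁ e) ⊗≫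
        M.X ◁ (traceForm M D ▷ M.X) ⊗≫ 𝟙 _ := by monoidal
    _ = 𝟙 _ ⊗≫ ((𝟙_ C) ◁ e ≫ f ▷ (M.X ⊗ M.X)) ⊗≫
        M.X ◁ (traceForm M D ▷ M.X) ⊗≫ 𝟙 _ := by rw [← whisker_exchange]
    _ = 𝟙 _ ⊗≫ e ⊗≫
        ((f ▷ M.X ≫ (α_ M.X M.X M.X).hom ≫ M.X ◁ traceForm M D) ▷ M.X) ⊗≫ 𝟙 _ := by
        monoidal
    _ = e := by rw [h2']; monoidal

/-- The adjoint of the trace form is computed by the evaluation. -/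
theorem tStar_pairing :
    (M.X ◁ tStar M D) ≫ D.ε = traceForm M D := by
  calc (M.X ◁ tStar M D) ≫ D.ε
      = 𝟙 _ ⊗≫ M.X ◁ (D.η ▷ M.X) ⊗≫
          (((M.X ⊗ D.DA : C) ◁ traceForm M D) ≫ (D.ε ▷ (𝟙_ C))) ⊗≫ 𝟙 _ := by
        rw [tStar]; monoidal
    _ = 𝟙 _ ⊗≫ M.X ◁ (D.η ▷ M.X) ⊗≫ D.ε ▷ (M.X ⊗ M.X) ⊗≫
          (𝟙_ C) ◁ traceForm M D ⊗≫ 𝟙 _ := by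
        rw [whisker_exchange]; monoidal
    _ = (((ρ_ M.X).inv ≫ M.X ◁ D.η ≫ (α_ M.X D.DA M.X).inv ≫ D.ε ▷ M.X ≫ (λ_ M.X).hom)
          ▷ M.X) ≫ traceForm M D := by monoidal
    _ = traceForm M D := by rw [D.triangle₁]; simp

/-- Cancellation against the trace form. -/
theorem traceForm_cancel {f : 𝟙_ C ⟶ M.X ⊗ M.X} (h2 : Tri2 M D f)
    {X Y : C} (u v : X ⟶ M.X ⊗ Y)
    (H : (M.X ◁ u) ≫ (α_ M.X M.X Y).inv ≫ (traceForm M D ▷ Y)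
        = (M.X ◁ v) ≫ (α_ M.X M.X Y).inv ≫ (traceForm M D ▷ Y)) : u = v := by
  have h2' : f ▷ M.X ≫ (α_ M.X M.X M.X).hom ≫ M.X ◁ traceForm M D
      = (λ_ M.X).hom ≫ (ρ_ M.X).inv := h2
  have recon : ∀ w : X ⟶ M.X ⊗ Y,
      (λ_ X).inv ≫ (f ▷ X) ≫ (α_ M.X M.X X).hom ≫
        (M.X ◁ ((M.X ◁ w) ≫ (α_ M.X M.X Y).inv ≫ (traceForm M D ▷ Y))) ≫
        (M.X ◁ (λ_ Y).hom) = w := by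
    intro w
    calc (λ_ X).inv ≫ (f ▷ X) ≫ (α_ M.X M.X X).hom ≫
        (M.X ◁ ((M.X ◁ w) ≫ (α_ M.X M.X Y).inv ≫ (traceForm M D ▷ Y))) ≫
        (M.X ◁ (λ_ Y).hom)
        = 𝟙 _ ⊗≫ (f ▷ X ≫ (M.X ⊗ M.X : C) ◁ w) ⊗≫
            M.X ◁ (traceForm M D ▷ Y) ⊗≫ 𝟙 _ := by monoidal
      _ = 𝟙 _ ⊗≫ ((𝟙_ C) ◁ w ≫ f ▷ (M.X ⊗ Y)) ⊗≫
            M.X ◁ (traceForm M D ▷ Y) ⊗≫ 𝟙 _ := by rw [← whisker_exchange]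
      _ = 𝟙 _ ⊗≫ w ⊗≫
            ((f ▷ M.X ≫ (α_ M.X M.X M.X).hom ≫ M.X ◁ traceForm M D) ▷ Y) ⊗≫ 𝟙 _ := by
          monoidal
      _ = w := by rw [h2']; monoidal
  rw [← recon u, ← recon v, H]

/-- Cancellation of points against the trace form. -/
theorem traceForm_cancel_point {f : 𝟙_ C ⟶ M.X ⊗ M.X} (h2 : Tri2 M D f)
    {x y : 𝟙_ C ⟶ M.X}
    (H : (M.X ◁ x) ≫ traceForm M D = (M.X ◁ y) ≫ traceForm M D) : x = y := by
  have h2' : f ▷ M.X ≫ (α_ M.X M.X M.X).hom ≫ M.X ◁ traceForm M D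
      = (λ_ M.X).hom ≫ (ρ_ M.X).inv := h2
  have recon : ∀ z : 𝟙_ C ⟶ M.X,
      (λ_ (𝟙_ C)).inv ≫ (f ▷ (𝟙_ C)) ≫ (α_ M.X M.X (𝟙_ C)).hom ≫
        (M.X ◁ ((M.X ◁ z) ≫ traceForm M D)) ≫ (ρ_ M.X).hom = z := by
    intro z
    calc (λ_ (𝟙_ C)).inv ≫ (f ▷ (𝟙_ C)) ≫ (α_ M.X M.X (𝟙_ C)).hom ≫
        (M.X ◁ ((M.X ◁ z) ≫ traceForm M D)) ≫ (ρ_ M.X).hom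
        = 𝟙 _ ⊗≫ (f ▷ (𝟙_ C) ≫ (M.X ⊗ M.X : C) ◁ z) ⊗≫
            M.X ◁ traceForm M D ⊗≫ 𝟙 _ := by monoidal
      _ = 𝟙 _ ⊗≫ ((𝟙_ C) ◁ z ≫ f ▷ M.X) ⊗≫ M.X ◁ traceForm M D ⊗≫ 𝟙 _ := by
          rw [← whisker_exchange]
      _ = 𝟙 _ ⊗≫ z ⊗≫
            (f ▷ M.X ≫ (α_ M.X M.X M.X).hom ≫ M.X ◁ traceForm M D) ⊗≫ 𝟙 _ := by
          monoidal
      _ = z := by rw [h2']; monoidal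
  rw [← recon x, ← recon y, H]

/-- The key trace computation: for a separability idempotent on a commutative
algebra, partial trace of the idempotent gives the unit. -/
theorem kappa_trace (hcomm : Commutative M) {f : 𝟙_ C ⟶ M.X ⊗ M.X}
    (h1 : kappa1 M f) (h2 : kappa2 M f) :
    f ≫ (tr M D ▷ M.X) ≫ (λ_ M.X).hom = M.mon.one := by
  have hcomm' : (β_ M.X M.X).hom ≫ M.mon.mul = M.mon.mul := hcomm
  have h1' : f ≫ M.mon.mul = M.mon.one := h1
  have h2' : (λ_ M.X).inv ≫ (f ▷ M.X) ≫ (α_ M.X M.X M.X).hom ≫ (M.X ◁ M.mon.mul)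
      = (ρ_ M.X).inv ≫ (M.X ◁ f) ≫ (α_ M.X M.X M.X).inv ≫ (M.mon.mul ▷ M.X) := h2
  have hswap : ∀ X Y : C, (β_ X Y).inv = (β_ Y X).hom := fun X Y => by
    rw [SymmetricCategory.braiding_swap_eq_inv_braiding]
  calc f ≫ (tr M D ▷ M.X) ≫ (λ_ M.X).hom
      = 𝟙 _ ⊗≫ f ⊗≫ (M.X ◁ (D.η ≫ (β_ D.DA M.X).hom)) ▷ M.X ⊗≫
          ((M.mon.mul ▷ D.DA) ▷ M.X) ⊗≫ D.ε ▷ M.X ⊗≫ 𝟙 _ := by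
        simp only [tr]; monoidal
    _ = 𝟙 _ ⊗≫ f ⊗≫ (M.X ◁ (D.η ≫ (β_ D.DA M.X).hom)) ▷ M.X ⊗≫
          ((((β_ M.X M.X).hom ≫ M.mon.mul) ▷ D.DA) ▷ M.X) ⊗≫ D.ε ▷ M.X ⊗≫ 𝟙 _ := by
        rw [hcomm']
    _ = 𝟙 _ ⊗≫ f ⊗≫
          ((M.X ◁ (D.η ≫ (β_ D.DA M.X).hom) ≫ (α_ M.X M.X D.DA).inv ≫
            ((β_ M.X M.X).hom ▷ D.DA)) ▷ M.X) ⊗≫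
          ((M.mon.mul ▷ D.DA) ▷ M.X) ⊗≫ D.ε ▷ M.X ⊗≫ 𝟙 _ := by monoidal
    _ = 𝟙 _ ⊗≫ f ⊗≫
          (((β_ M.X (𝟙_ C)).hom ≫ ((D.η ≫ (β_ D.DA M.X).hom) ▷ M.X) ≫
            (α_ M.X D.DA M.X).hom ≫ (M.X ◁ (β_ M.X D.DA).inv) ≫
            (α_ M.X M.X D.DA).inv) ▷ M.X) ⊗≫
          ((M.mon.mul ▷ D.DA) ▷ M.X) ⊗≫ D.ε ▷ M.X ⊗≫ 𝟙 _ := by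
        rw [create_cross]
    _ = 𝟙 _ ⊗≫ ((𝟙_ C) ◁ f ≫ (D.η ≫ (β_ D.DA M.X).hom) ▷ (M.X ⊗ M.X)) ⊗≫
          ((M.X ◁ (β_ D.DA M.X).hom) ▷ M.X) ⊗≫
          ((M.mon.mul ▷ D.DA) ▷ M.X) ⊗≫ D.ε ▷ M.X ⊗≫ 𝟙 _ := by
        rw [hswap, braiding_tensorUnit_right]; monoidal
    _ = 𝟙 _ ⊗≫ ((D.η ≫ (β_ D.DA M.X).hom) ▷ (𝟙_ C) ≫ (M.X ⊗ D.DA : C) ◁ f) ⊗≫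
          ((M.X ◁ (β_ D.DA M.X).hom) ▷ M.X) ⊗≫
          ((M.mon.mul ▷ D.DA) ▷ M.X) ⊗≫ D.ε ▷ M.X ⊗≫ 𝟙 _ := by
        rw [whisker_exchange]
    _ = 𝟙 _ ⊗≫ D.η ▷ (𝟙_ C) ⊗≫
          ((β_ D.DA M.X).hom ▷ (𝟙_ C) ≫ (M.X ⊗ D.DA : C) ◁ f) ⊗≫
          ((M.X ◁ (β_ D.DA M.X).hom) ▷ M.X) ⊗≫
          ((M.mon.mul ▷ D.DA) ▷ M.X) ⊗≫ D.ε ▷ M.X ⊗≫ 𝟙 _ := by monoidal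
    _ = 𝟙 _ ⊗≫ D.η ▷ (𝟙_ C) ⊗≫
          ((D.DA ⊗ M.X : C) ◁ f ≫ (β_ D.DA M.X).hom ▷ (M.X ⊗ M.X)) ⊗≫
          ((M.X ◁ (β_ D.DA M.X).hom) ▷ M.X) ⊗≫
          ((M.mon.mul ▷ D.DA) ▷ M.X) ⊗≫ D.ε ▷ M.X ⊗≫ 𝟙 _ := by
        rw [← whisker_exchange]
    _ = 𝟙 _ ⊗≫ D.η ⊗≫ (D.DA ⊗ M.X : C) ◁ f ⊗≫
          (((α_ D.DA M.X M.X).inv ≫ (β_ D.DA M.X).hom ▷ M.X ≫ (α_ M.X D.DA M.X).hom ≫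
            M.X ◁ (β_ D.DA M.X).hom ≫ (α_ M.X M.X D.DA).inv) ▷ M.X) ⊗≫
          ((M.mon.mul ▷ D.DA) ▷ M.X) ⊗≫ D.ε ▷ M.X ⊗≫ 𝟙 _ := by monoidal
    _ = 𝟙 _ ⊗≫ D.η ⊗≫ (D.DA ⊗ M.X : C) ◁ f ⊗≫
          (((β_ D.DA (M.X ⊗ M.X)).hom ≫ (M.mon.mul ▷ D.DA)) ▷ M.X) ⊗≫
          D.ε ▷ M.X ⊗≫ 𝟙 _ := by
        rw [← BraidedCategory.braiding_tensor_right_hom]; monoidal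
    _ = 𝟙 _ ⊗≫ D.η ⊗≫ (D.DA ⊗ M.X : C) ◁ f ⊗≫
          (((D.DA ◁ M.mon.mul) ≫ (β_ D.DA M.X).hom) ▷ M.X) ⊗≫
          D.ε ▷ M.X ⊗≫ 𝟙 _ := by
        rw [← BraidedCategory.braiding_naturality_right]
    _ = 𝟙 _ ⊗≫ D.η ⊗≫
          D.DA ◁ ((ρ_ M.X).inv ≫ (M.X ◁ f) ≫ (α_ M.X M.X M.X).inv ≫ (M.mon.mul ▷ M.X)) ⊗≫
          ((β_ D.DA M.X).hom ▷ M.X) ⊗≫ D.ε ▷ M.X ⊗≫ 𝟙 _ := by monoidal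
    _ = 𝟙 _ ⊗≫ D.η ⊗≫
          D.DA ◁ ((λ_ M.X).inv ≫ (f ▷ M.X) ≫ (α_ M.X M.X M.X).hom ≫ (M.X ◁ M.mon.mul)) ⊗≫
          ((β_ D.DA M.X).hom ▷ M.X) ⊗≫ D.ε ▷ M.X ⊗≫ 𝟙 _ := by rw [← h2']
    _ = 𝟙 _ ⊗≫ D.η ⊗≫ D.DA ◁ (f ▷ M.X) ⊗≫
          ((D.DA ⊗ M.X : C) ◁ M.mon.mul ≫ (β_ D.DA M.X).hom ▷ M.X) ⊗≫
          D.ε ▷ M.X ⊗≫ 𝟙 _ := by monoidal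
    _ = 𝟙 _ ⊗≫ D.η ⊗≫ D.DA ◁ (f ▷ M.X) ⊗≫
          ((β_ D.DA M.X).hom ▷ (M.X ⊗ M.X) ≫ (M.X ⊗ D.DA : C) ◁ M.mon.mul) ⊗≫
          D.ε ▷ M.X ⊗≫ 𝟙 _ := by rw [whisker_exchange]
    _ = 𝟙 _ ⊗≫ D.η ⊗≫ D.DA ◁ (f ▷ M.X) ⊗≫ (β_ D.DA M.X).hom ▷ (M.X ⊗ M.X) ⊗≫
          ((M.X ⊗ D.DA : C) ◁ M.mon.mul ≫ D.ε ▷ M.X) ⊗≫ 𝟙 _ := by monoidal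
    _ = 𝟙 _ ⊗≫ D.η ⊗≫ D.DA ◁ (f ▷ M.X) ⊗≫ (β_ D.DA M.X).hom ▷ (M.X ⊗ M.X) ⊗≫
          (D.ε ▷ (M.X ⊗ M.X) ≫ (𝟙_ C) ◁ M.mon.mul) ⊗≫ 𝟙 _ := by rw [whisker_exchange]
    _ = 𝟙 _ ⊗≫ D.η ⊗≫ D.DA ◁ (f ▷ M.X) ⊗≫ (β_ D.DA M.X).hom ▷ (M.X ⊗ M.X) ⊗≫
          (D.ε ▷ (M.X ⊗ M.X) ≫ (𝟙_ C) ◁ (β_ M.X M.X).hom ≫ (𝟙_ C) ◁ M.mon.mul) ⊗≫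
          𝟙 _ := by
        have hins : (D.ε ▷ (M.X ⊗ M.X)) ≫ ((𝟙_ C) ◁ M.mon.mul)
            = D.ε ▷ (M.X ⊗ M.X) ≫ (𝟙_ C) ◁ (β_ M.X M.X).hom ≫ (𝟙_ C) ◁ M.mon.mul := by
          rw [← MonoidalCategory.whiskerLeft_comp, hcomm']
        rw [← hins]
    _ = 𝟙 _ ⊗≫ D.η ⊗≫ D.DA ◁ (f ▷ M.X) ⊗≫ (β_ D.DA M.X).hom ▷ (M.X ⊗ M.X) ⊗≫
          ((M.X ⊗ D.DA : C) ◁ (β_ M.X M.X).hom ≫ D.ε ▷ (M.X ⊗ M.X)) ⊗≫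
          (𝟙_ C) ◁ M.mon.mul ⊗≫ 𝟙 _ := by
        have hexg := (whisker_exchange D.ε (β_ M.X M.X).hom).symm
        rw [reassoc_of% hexg]; monoidal
    _ = 𝟙 _ ⊗≫ D.η ⊗≫
          ((D.DA ◁ f ≫ (α_ D.DA M.X M.X).inv ≫ (β_ D.DA M.X).hom ▷ M.X) ▷ M.X) ⊗≫
          ((M.X ⊗ D.DA : C) ◁ (β_ M.X M.X).hom) ⊗≫ D.ε ▷ (M.X ⊗ M.X) ⊗≫
          (𝟙_ C) ◁ M.mon.mul ⊗≫ 𝟙 _ := by monoidal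
    _ = 𝟙 _ ⊗≫ D.η ⊗≫
          (((β_ D.DA (𝟙_ C)).hom ≫ (f ▷ D.DA) ≫ (α_ M.X M.X D.DA).hom ≫
            (M.X ◁ (β_ D.DA M.X).inv) ≫ (α_ M.X D.DA M.X).inv) ▷ M.X) ⊗≫
          ((M.X ⊗ D.DA : C) ◁ (β_ M.X M.X).hom) ⊗≫ D.ε ▷ (M.X ⊗ M.X) ⊗≫
          (𝟙_ C) ◁ M.mon.mul ⊗≫ 𝟙 _ := by rw [create_cross]
    _ = 𝟙 _ ⊗≫ ((𝟙_ C) ◁ D.η ≫ f ▷ (D.DA ⊗ M.X)) ⊗≫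
          ((M.X ◁ (β_ M.X D.DA).hom) ▷ M.X) ⊗≫
          ((M.X ⊗ D.DA : C) ◁ (β_ M.X M.X).hom) ⊗≫ D.ε ▷ (M.X ⊗ M.X) ⊗≫
          (𝟙_ C) ◁ M.mon.mul ⊗≫ 𝟙 _ := by
        rw [hswap, braiding_tensorUnit_right]; monoidal
    _ = 𝟙 _ ⊗≫ (f ▷ (𝟙_ C) ≫ (M.X ⊗ M.X : C) ◁ D.η) ⊗≫
          ((M.X ◁ (β_ M.X D.DA).hom) ▷ M.X) ⊗≫
          ((M.X ⊗ D.DA : C) ◁ (β_ M.X M.X).hom) ⊗≫ D.ε ▷ (M.X ⊗ M.X) ⊗≫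
          (𝟙_ C) ◁ M.mon.mul ⊗≫ 𝟙 _ := by rw [whisker_exchange]
    _ = 𝟙 _ ⊗≫ f ⊗≫ M.X ◁ (M.X ◁ D.η) ⊗≫
          M.X ◁ ((α_ M.X D.DA M.X).inv ≫ ((β_ M.X D.DA).hom ▷ M.X) ≫
            (α_ D.DA M.X M.X).hom ≫ (D.DA ◁ (β_ M.X M.X).hom) ≫
            (α_ D.DA M.X M.X).inv) ⊗≫
          D.ε ▷ (M.X ⊗ M.X) ⊗≫ (𝟙_ C) ◁ M.mon.mul ⊗≫ 𝟙 _ := by monoidal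
    _ = 𝟙 _ ⊗≫ f ⊗≫ M.X ◁ (M.X ◁ D.η ≫ (β_ M.X (D.DA ⊗ M.X)).hom) ⊗≫
          D.ε ▷ (M.X ⊗ M.X) ⊗≫ (𝟙_ C) ◁ M.mon.mul ⊗≫ 𝟙 _ := by
        rw [← BraidedCategory.braiding_tensor_right_hom]; monoidal
    _ = 𝟙 _ ⊗≫ f ⊗≫ M.X ◁ (D.η ▷ M.X) ⊗≫ D.ε ▷ (M.X ⊗ M.X) ⊗≫
          (𝟙_ C) ◁ M.mon.mul ⊗≫ 𝟙 _ := by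
        rw [BraidedCategory.braiding_naturality_right, braiding_tensorUnit_right]
        monoidal
    _ = f ≫ (((ρ_ M.X).inv ≫ M.X ◁ D.η ≫ (α_ M.X D.DA M.X).inv ≫ D.ε ▷ M.X ≫
          (λ_ M.X).hom) ▷ M.X) ≫ M.mon.mul := by monoidal
    _ = M.mon.one := by rw [D.triangle₁]; simpa using h1'

/-- A separability idempotent on a commutative algebra yields the first zig-zag. -/
theorem tri1_of_kappa (hcomm : Commutative M) {f : 𝟙_ C ⟶ M.X ⊗ M.X}
    (h1 : kappa1 M f) (h2 : kappa2 M f) : Tri1 M D f := by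
  have h2' : (λ_ M.X).inv ≫ (f ▷ M.X) ≫ (α_ M.X M.X M.X).hom ≫ (M.X ◁ M.mon.mul)
      = (ρ_ M.X).inv ≫ (M.X ◁ f) ≫ (α_ M.X M.X M.X).inv ≫ (M.mon.mul ▷ M.X) := h2
  have kt : f ≫ (tr M D ▷ M.X) ≫ (λ_ M.X).hom = M.mon.one :=
    kappa_trace M D hcomm h1 h2
  show M.X ◁ f ≫ (α_ M.X M.X M.X).inv ≫ traceForm M D ▷ M.X
      = (ρ_ M.X).hom ≫ (λ_ M.X).inv
  calc M.X ◁ f ≫ (α_ M.X M.X M.X).inv ≫ traceForm M D ▷ M.X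
      = (ρ_ M.X).hom ≫ ((ρ_ M.X).inv ≫ (M.X ◁ f) ≫ (α_ M.X M.X M.X).inv ≫
          (M.mon.mul ▷ M.X)) ≫ (tr M D ▷ M.X) := by
        simp only [traceForm]; monoidal
    _ = (ρ_ M.X).hom ≫ ((λ_ M.X).inv ≫ (f ▷ M.X) ≫ (α_ M.X M.X M.X).hom ≫
          (M.X ◁ M.mon.mul)) ≫ (tr M D ▷ M.X) := by rw [← h2']
    _ = (ρ_ M.X).hom ≫ (λ_ M.X).inv ≫ (f ▷ M.X) ≫ (α_ M.X M.X M.X).hom ≫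
          (tr M D ▷ (M.X ⊗ M.X)) ≫ ((𝟙_ C) ◁ M.mon.mul) := by
        simp only [Category.assoc]
        rw [whisker_exchange]
    _ = 𝟙 _ ⊗≫ ((f ≫ (tr M D ▷ M.X) ≫ (λ_ M.X).hom) ▷ M.X) ⊗≫ M.mon.mul ⊗≫ 𝟙 _ := by
        monoidal
    _ = 𝟙 _ ⊗≫ (M.mon.one ▷ M.X ≫ M.mon.mul) ⊗≫ 𝟙 _ := by rw [kt]; monoidal
    _ = (ρ_ M.X).hom ≫ (λ_ M.X).inv := by rw [MonObj.one_mul]; monoidal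

/-- Separability yields a separability idempotent. -/
theorem sep_kappa (hsep : Separable M) :
    ∃ f : 𝟙_ C ⟶ M.X ⊗ M.X, kappa1 M f ∧ kappa2 M f := by
  obtain ⟨σ, hσ, hl, hr⟩ := hsep
  refine ⟨M.mon.one ≫ σ, ?_, ?_⟩
  · show (M.mon.one ≫ σ) ≫ M.mon.mul = M.mon.one
    rw [Category.assoc, hσ, Category.comp_id]
  · show (λ_ M.X).inv ≫ ((M.mon.one ≫ σ) ▷ M.X) ≫ (α_ M.X M.X M.X).hom ≫ (M.X ◁ M.mon.mul)
      = (ρ_ M.X).inv ≫ (M.X ◁ (M.mon.one ≫ σ)) ≫ (α_ M.X M.X M.X).inv ≫ (M.mon.mul ▷ M.X)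
    rw [comp_whiskerRight, MonoidalCategory.whiskerLeft_comp]
    simp only [Category.assoc]
    slice_lhs 3 5 => rw [hl]
    slice_rhs 3 5 => rw [← hr]
    slice_lhs 2 3 => rw [MonObj.one_mul]
    slice_rhs 2 3 => rw [MonObj.mul_one]
    simp

include D in
theorem strong_of_sep (hcomm : Commutative M) (hsep : Separable M) :
    StronglySeparable M := by
  obtain ⟨f, h1, h2⟩ := sep_kappa M hsep
  have t1 : Tri1 M D f := tri1_of_kappa M D hcomm h1 h2
  have t2 : Tri2 M D (f ≫ (β_ M.X M.X).hom) := tri2_swap M D hcomm t1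
  exact ⟨f, h1, h2, (tri_uniq M D t1 t2).symm⟩

theorem sepComul_mul {f : 𝟙_ C ⟶ M.X ⊗ M.X} (h1 : kappa1 M f) :
    sepComul M f ≫ M.mon.mul = 𝟙 M.X := by
  have h1' : f ≫ M.mon.mul = M.mon.one := h1
  rw [sepComul]
  simp only [Category.assoc]
  slice_lhs 3 5 => rw [← MonObj.mul_assoc]
  slice_lhs 2 3 => rw [← comp_whiskerRight, h1']
  simp

theorem sepComul_left {f : 𝟙_ C ⟶ M.X ⊗ M.X} :
    (sepComul M f ▷ M.X) ≫ (α_ M.X M.X M.X).hom ≫ (M.X ◁ M.mon.mul)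
      = M.mon.mul ≫ sepComul M f := by
  calc (sepComul M f ▷ M.X) ≫ (α_ M.X M.X M.X).hom ≫ (M.X ◁ M.mon.mul)
      = 𝟙 _ ⊗≫ f ▷ (M.X ⊗ M.X) ⊗≫
          M.X ◁ (M.mon.mul ▷ M.X ≫ M.mon.mul) ⊗≫ 𝟙 _ := by
        rw [sepComul]; monoidal
    _ = 𝟙 _ ⊗≫ (f ▷ (M.X ⊗ M.X) ≫ (M.X ⊗ M.X) ◁ M.mon.mul) ⊗≫ M.X ◁ M.mon.mul ⊗≫ 𝟙 _ := by
        rw [MonObj.mul_assoc]; monoidal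
    _ = 𝟙 _ ⊗≫ 𝟙_ C ◁ M.mon.mul ⊗≫ f ▷ M.X ⊗≫ M.X ◁ M.mon.mul ⊗≫ 𝟙 _ := by
        rw [← whisker_exchange]; monoidal
    _ = M.mon.mul ≫ sepComul M f := by
        rw [sepComul]; monoidal

theorem sepComul_right {f : 𝟙_ C ⟶ M.X ⊗ M.X} (h2 : kappa2 M f) :
    M.mon.mul ≫ sepComul M f
      = (M.X ◁ sepComul M f) ≫ (α_ M.X M.X M.X).inv ≫ (M.mon.mul ▷ M.X) := by
  have hS : sepComul M f
      = (ρ_ M.X).inv ≫ (M.X ◁ f) ≫ (α_ M.X M.X M.X).inv ≫ (M.mon.mul ▷ M.X) := h2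
  rw [hS]
  calc M.mon.mul ≫ (ρ_ M.X).inv ≫ (M.X ◁ f) ≫ (α_ M.X M.X M.X).inv ≫ (M.mon.mul ▷ M.X)
      = 𝟙 _ ⊗≫ (M.mon.mul ▷ 𝟙_ C ≫ M.X ◁ f) ⊗≫ M.mon.mul ▷ M.X ⊗≫ 𝟙 _ := by
        monoidal
    _ = 𝟙 _ ⊗≫ ((M.X ⊗ M.X : C) ◁ f) ⊗≫
          (((M.mon.mul ▷ M.X) ≫ M.mon.mul) ▷ M.X) ⊗≫ 𝟙 _ := by
        rw [← whisker_exchange]; monoidal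
    _ = 𝟙 _ ⊗≫ ((M.X ⊗ M.X : C) ◁ f) ⊗≫
          (((α_ M.X M.X M.X).hom ≫ M.X ◁ M.mon.mul ≫ M.mon.mul) ▷ M.X) ⊗≫ 𝟙 _ := by
        rw [MonObj.mul_assoc]
    _ = (M.X ◁ ((ρ_ M.X).inv ≫ (M.X ◁ f) ≫ (α_ M.X M.X M.X).inv ≫ (M.mon.mul ▷ M.X)))
          ≫ (α_ M.X M.X M.X).inv ≫ (M.mon.mul ▷ M.X) := by
        monoidal

theorem sep_of_strong (hstrong : StronglySeparable M) : Separable M := by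
  obtain ⟨f, h1, h2, _⟩ := hstrong
  exact ⟨sepComul M f, sepComul_mul M h1, sepComul_left M, sepComul_right M h2⟩

/-- The self-pairing of the algebra given by the trace form. -/
def selfPairing {f : 𝟙_ C ⟶ M.X ⊗ M.X} (h1 : Tri1 M D f) (h2 : Tri2 M D f) :
    ExactPairing M.X M.X := ⟨f, traceForm M D, h1, h2⟩

/-- The duality data as an exact pairing. -/
def dualPairing : ExactPairing D.DA M.X where
  coevaluation' := D.η
  evaluation' := D.ε
  coevaluation_evaluation' := by
    rw [← cancel_epi (ρ_ M.X).inv, ← cancel_mono (λ_ M.X).hom]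
    simpa [Category.assoc] using D.triangle₁
  evaluation_coevaluation' := by
    rw [← cancel_epi (λ_ D.DA).inv, ← cancel_mono (ρ_ D.DA).hom]
    simpa [Category.assoc] using D.triangle₂

theorem isIso_of_tri {f : 𝟙_ C ⟶ M.X ⊗ M.X}
    (h1 : Tri1 M D f) (h2 : Tri2 M D f) : IsIso (tStar M D) := by
  have key : tStar M D
      = (@leftDualIso C _ _ M.X D.DA M.X (selfPairing M D h1 h2) (dualPairing M D)).hom := by
    simp only [leftDualIso, leftAdjointMate, tStar,
      ExactPairing.coevaluation, ExactPairing.evaluation, selfPairing, dualPairing]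
    simp
    rfl
  rw [key]
  infer_instance

theorem tri2_inv (h : IsIso (tStar M D)) :
    Tri2 M D (D.η ≫ (inv (tStar M D) ▷ M.X)) := by
  show (D.η ≫ (inv (tStar M D) ▷ M.X)) ▷ M.X ≫ (α_ M.X M.X M.X).hom ≫
      M.X ◁ traceForm M D = (λ_ M.X).hom ≫ (ρ_ M.X).inv
  calc (D.η ≫ (inv (tStar M D) ▷ M.X)) ▷ M.X ≫ (α_ M.X M.X M.X).hom ≫
      M.X ◁ traceForm M D
      = 𝟙 _ ⊗≫ D.η ▷ M.X ⊗≫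
          (inv (tStar M D) ▷ (M.X ⊗ M.X) ≫ M.X ◁ traceForm M D) ⊗≫ 𝟙 _ := by
        monoidal
    _ = 𝟙 _ ⊗≫ D.η ▷ M.X ⊗≫
          (D.DA ◁ traceForm M D ≫ inv (tStar M D) ▷ (𝟙_ C)) ⊗≫ 𝟙 _ := by
        rw [← whisker_exchange]
    _ = (λ_ M.X).hom ≫ (((λ_ M.X).inv ≫ (D.η ▷ M.X) ≫ (α_ D.DA M.X M.X).hom ≫
          (D.DA ◁ traceForm M D) ≫ (ρ_ D.DA).hom) ≫ inv (tStar M D)) ≫ (ρ_ M.X).inv := by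
        monoidal
    _ = (λ_ M.X).hom ≫ (tStar M D ≫ inv (tStar M D)) ≫ (ρ_ M.X).inv := rfl
    _ = (λ_ M.X).hom ≫ (ρ_ M.X).inv := by rw [IsIso.hom_inv_id, Category.id_comp]

theorem tri1_inv (h : IsIso (tStar M D)) :
    Tri1 M D (D.η ≫ (inv (tStar M D) ▷ M.X)) := by
  show M.X ◁ (D.η ≫ (inv (tStar M D) ▷ M.X)) ≫ (α_ M.X M.X M.X).inv ≫
      traceForm M D ▷ M.X = (ρ_ M.X).hom ≫ (λ_ M.X).inv
  rw [← tStar_pairing]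
  calc M.X ◁ (D.η ≫ (inv (tStar M D) ▷ M.X)) ≫ (α_ M.X M.X M.X).inv ≫
      ((M.X ◁ tStar M D ≫ D.ε) ▷ M.X)
      = 𝟙 _ ⊗≫ M.X ◁ D.η ⊗≫
          ((M.X ◁ (inv (tStar M D) ≫ tStar M D)) ▷ M.X) ⊗≫ (D.ε ▷ M.X) ⊗≫ 𝟙 _ := by
        monoidal
    _ = (ρ_ M.X).hom ≫ ((ρ_ M.X).inv ≫ M.X ◁ D.η ≫ (α_ M.X D.DA M.X).inv ≫
          D.ε ▷ M.X ≫ (λ_ M.X).hom) ≫ (λ_ M.X).inv := by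
        rw [IsIso.inv_hom_id]; monoidal
    _ = (ρ_ M.X).hom ≫ (λ_ M.X).inv := by rw [D.triangle₁]; simp

theorem kappa1_inv (hcomm : Commutative M) (h : IsIso (tStar M D)) :
    kappa1 M (D.η ≫ (inv (tStar M D) ▷ M.X)) := by
  have hcomm' : (β_ M.X M.X).hom ≫ M.mon.mul = M.mon.mul := hcomm
  have ht : M.mon.mul ≫ tr M D = (M.X ◁ tStar M D) ≫ D.ε := (tStar_pairing M D).symm
  have e1 : (inv (tStar M D) ▷ M.X) ≫ M.mon.mul
      = (β_ D.DA M.X).hom ≫ (M.X ◁ inv (tStar M D)) ≫ M.mon.mul := by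
    conv_lhs => rw [← hcomm']
    rw [BraidedCategory.braiding_naturality_left_assoc]
  have hr : (M.X ◁ M.mon.one) ≫ traceForm M D = (ρ_ M.X).hom ≫ tr M D := by
    rw [traceForm, ← Category.assoc, MonObj.mul_one]
  have hl : (M.X ◁ (D.η ≫ (inv (tStar M D) ▷ M.X) ≫ M.mon.mul)) ≫ traceForm M D
      = (ρ_ M.X).hom ≫ tr M D := by
    calc (M.X ◁ (D.η ≫ (inv (tStar M D) ▷ M.X) ≫ M.mon.mul)) ≫ traceForm M D
        = 𝟙 _ ⊗≫ M.X ◁ D.η ⊗≫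
            M.X ◁ ((inv (tStar M D) ▷ M.X) ≫ M.mon.mul) ⊗≫ traceForm M D := by
          monoidal
      _ = 𝟙 _ ⊗≫ M.X ◁ D.η ⊗≫
            M.X ◁ ((β_ D.DA M.X).hom ≫ (M.X ◁ inv (tStar M D)) ≫ M.mon.mul) ⊗≫
            traceForm M D := by rw [e1]
      _ = 𝟙 _ ⊗≫ M.X ◁ D.η ⊗≫ M.X ◁ (β_ D.DA M.X).hom ⊗≫
            M.X ◁ (M.X ◁ inv (tStar M D)) ⊗≫
            (((α_ M.X M.X M.X).hom ≫ M.X ◁ M.mon.mul ≫ M.mon.mul) ≫ tr M D) ⊗≫ 𝟙 _ := by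
          simp only [traceForm]; monoidal
      _ = 𝟙 _ ⊗≫ M.X ◁ D.η ⊗≫ M.X ◁ (β_ D.DA M.X).hom ⊗≫
            ((M.X ⊗ M.X : C) ◁ inv (tStar M D) ≫ M.mon.mul ▷ M.X) ⊗≫
            (M.mon.mul ≫ tr M D) ⊗≫ 𝟙 _ := by
          rw [← MonObj.mul_assoc]; monoidal
      _ = 𝟙 _ ⊗≫ M.X ◁ D.η ⊗≫ M.X ◁ (β_ D.DA M.X).hom ⊗≫
            (M.mon.mul ▷ D.DA ≫ M.X ◁ inv (tStar M D)) ⊗≫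
            (M.mon.mul ≫ tr M D) ⊗≫ 𝟙 _ := by
          rw [whisker_exchange]
      _ = 𝟙 _ ⊗≫ M.X ◁ D.η ⊗≫ M.X ◁ (β_ D.DA M.X).hom ⊗≫ M.mon.mul ▷ D.DA ⊗≫
            (M.X ◁ inv (tStar M D) ≫ M.X ◁ tStar M D ≫ D.ε) ⊗≫ 𝟙 _ := by
          rw [ht]; monoidal
      _ = 𝟙 _ ⊗≫ M.X ◁ D.η ⊗≫ M.X ◁ (β_ D.DA M.X).hom ⊗≫ M.mon.mul ▷ D.DA ⊗≫
            D.ε ⊗≫ 𝟙 _ := by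
          rw [← MonoidalCategory.whiskerLeft_comp_assoc, IsIso.inv_hom_id,
            MonoidalCategory.whiskerLeft_id, Category.id_comp]
      _ = (ρ_ M.X).hom ≫ tr M D := by rw [tr]; monoidal
  exact traceForm_cancel_point M D (tri2_inv M D h)
    (by simpa [Category.assoc] using hl.trans hr.symm)

theorem kappa2_inv (h : IsIso (tStar M D))
    (h1 : Tri1 M D (D.η ≫ (inv (tStar M D) ▷ M.X)))
    (h2 : Tri2 M D (D.η ≫ (inv (tStar M D) ▷ M.X))) :
    kappa2 M (D.η ≫ (inv (tStar M D) ▷ M.X)) := by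
  set κ := D.η ≫ (inv (tStar M D) ▷ M.X) with hκ
  have t1' : M.X ◁ κ ≫ (α_ M.X M.X M.X).inv ≫ traceForm M D ▷ M.X
      = (ρ_ M.X).hom ≫ (λ_ M.X).inv := h1
  show (λ_ M.X).inv ≫ (κ ▷ M.X) ≫ (α_ M.X M.X M.X).hom ≫ (M.X ◁ M.mon.mul)
      = (ρ_ M.X).inv ≫ (M.X ◁ κ) ≫ (α_ M.X M.X M.X).inv ≫ (M.mon.mul ▷ M.X)
  apply traceForm_cancel M D h2
  have du : (M.X ◁ ((λ_ M.X).inv ≫ (κ ▷ M.X) ≫ (α_ M.X M.X M.X).hom ≫ (M.X ◁ M.mon.mul)))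
      ≫ (α_ M.X M.X M.X).inv ≫ (traceForm M D ▷ M.X) = M.mon.mul ≫ (λ_ M.X).inv := by
    calc (M.X ◁ ((λ_ M.X).inv ≫ (κ ▷ M.X) ≫ (α_ M.X M.X M.X).hom ≫ (M.X ◁ M.mon.mul)))
        ≫ (α_ M.X M.X M.X).inv ≫ (traceForm M D ▷ M.X)
        = 𝟙 _ ⊗≫ M.X ◁ (κ ▷ M.X) ⊗≫
            ((M.X ⊗ M.X : C) ◁ M.mon.mul ≫ traceForm M D ▷ M.X) ⊗≫ 𝟙 _ := by monoidal
      _ = 𝟙 _ ⊗≫ M.X ◁ (κ ▷ M.X) ⊗≫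
            (traceForm M D ▷ (M.X ⊗ M.X) ≫ (𝟙_ C) ◁ M.mon.mul) ⊗≫ 𝟙 _ := by
          rw [whisker_exchange]
      _ = 𝟙 _ ⊗≫ ((M.X ◁ κ ≫ (α_ M.X M.X M.X).inv ≫ traceForm M D ▷ M.X) ▷ M.X) ⊗≫
            (𝟙_ C) ◁ M.mon.mul ⊗≫ 𝟙 _ := by monoidal
      _ = M.mon.mul ≫ (λ_ M.X).inv := by rw [t1']; monoidal
  have dv : (M.X ◁ ((ρ_ M.X).inv ≫ (M.X ◁ κ) ≫ (α_ M.X M.X M.X).inv ≫ (M.mon.mul ▷ M.X)))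
      ≫ (α_ M.X M.X M.X).inv ≫ (traceForm M D ▷ M.X) = M.mon.mul ≫ (λ_ M.X).inv := by
    calc (M.X ◁ ((ρ_ M.X).inv ≫ (M.X ◁ κ) ≫ (α_ M.X M.X M.X).inv ≫ (M.mon.mul ▷ M.X)))
        ≫ (α_ M.X M.X M.X).inv ≫ (traceForm M D ▷ M.X)
        = 𝟙 _ ⊗≫ (M.X ⊗ M.X : C) ◁ κ ⊗≫
            (((α_ M.X M.X M.X).hom ≫ (M.X ◁ M.mon.mul) ≫ traceForm M D) ▷ M.X) ⊗≫ 𝟙 _ := by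
          monoidal
      _ = 𝟙 _ ⊗≫ (M.X ⊗ M.X : C) ◁ κ ⊗≫
            (((M.mon.mul ▷ M.X) ≫ traceForm M D) ▷ M.X) ⊗≫ 𝟙 _ := by
          rw [← traceForm_invariant]
      _ = 𝟙 _ ⊗≫ ((M.X ⊗ M.X : C) ◁ κ ≫ M.mon.mul ▷ (M.X ⊗ M.X)) ⊗≫
            (traceForm M D ▷ M.X) ⊗≫ 𝟙 _ := by monoidal
      _ = 𝟙 _ ⊗≫ (M.mon.mul ▷ (𝟙_ C) ≫ M.X ◁ κ) ⊗≫ traceForm M D ▷ M.X ⊗≫ 𝟙 _ := by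
          rw [whisker_exchange]
      _ = 𝟙 _ ⊗≫ M.mon.mul ▷ (𝟙_ C) ⊗≫
            (M.X ◁ κ ≫ (α_ M.X M.X M.X).inv ≫ traceForm M D ▷ M.X) ⊗≫ 𝟙 _ := by
          monoidal
      _ = M.mon.mul ≫ (λ_ M.X).inv := by rw [t1']; monoidal
  rw [du, dv]

theorem strong_of_isIso (hcomm : Commutative M) (h : IsIso (tStar M D)) :
    StronglySeparable M := by
  have t1 := tri1_inv M D h
  have t2 := tri2_inv M D h
  exact ⟨D.η ≫ (inv (tStar M D) ▷ M.X), kappa1_inv M D hcomm h,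
    kappa2_inv M D h t1 t2, (tri_uniq M D t1 (tri2_swap M D hcomm t1)).symm⟩

theorem isIso_of_strong (hcomm : Commutative M) (h : StronglySeparable M) :
    IsIso (tStar M D) := by
  obtain ⟨f, h1, h2, h3⟩ := h
  have t1 : Tri1 M D f := tri1_of_kappa M D hcomm h1 h2
  have t2 : Tri2 M D f := by
    have := tri2_swap M D hcomm t1
    rwa [← h3] at this
  exact isIso_of_tri M D t1 t2

end Aux

/-- A rigid commutative algebra is separable iff strongly separable
iff its trace form is nondegenerate. -/
theorem rigid_commutative_characterization (M : Mon C) (D : DualityData M.X)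
    (hcomm : Commutative M) :
    (Separable M ↔ StronglySeparable M) ∧
    (StronglySeparable M ↔ IsIso (tStar M D)) := by
  refine ⟨⟨fun hs => strong_of_sep M D hcomm hs, fun hs => sep_of_strong M hs⟩,
    ⟨fun hs => isIso_of_strong M D hcomm hs, fun h => strong_of_isIso M D hcomm h⟩⟩

end Paper
end
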